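/- arXiv:2408.13630 — 5 statements merged into one kernel-verified Lean document; each statement's English description precedes it below -/
import Mathlib

section
/- The tournament embedding T_T does not preserve the probabilistic Borda rule: there exist two profiles (e.g., on 3 candidates with 3 voters each) with equal tournament matrices whose probabilistic Borda lotteries differ. -/
/-!
Framework: candidates are `Fin m`.  A ballot is a strict linear order on the
candidates, represented by its (0-indexed) rank function, a bijection
`Fin m ≃ Fin m` sending each candidate to its position.  A profile is a finite
list of ballots (one per voter).  A lottery on the candidates is represented by
its probability mass function `Fin m → ℚ`, and a probabilistic social choice
function (PSCF) maps profiles to lotteries.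
-/

/-- A ballot: each candidate is assigned a distinct (0-indexed) rank;
rank `0` is the most preferred position. -/
abbrev Ballot (m : ℕ) := Fin m ≃ Fin m

/-- A profile is a finite list of ballots, one per voter. -/
abbrev Profile (m : ℕ) := List (Ballot m)

/-- `wt X a b` is the number of voters in `X` who strictly prefer `a` to `b`
(i.e. rank `a` above `b`). -/
def wt {m : ℕ} (X : Profile m) (a b : Fin m) : ℕ :=
  X.countP (fun x => decide (x a < x b))

/-- The uniform lottery over a finite set `W` of candidates
(probability `1/|W|` on members of `W`, probability `0` elsewhere). -/
def unif {m : ℕ} (W : Finset (Fin m)) : Fin m → ℚ :=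
  fun c => if c ∈ W then ((W.card : ℚ))⁻¹ else 0

/-- The set of candidates attaining the maximum value of the score `s`. -/
def argmaxSet {m : ℕ} {α : Type*} [LinearOrder α] (s : Fin m → α) : Finset (Fin m) :=
  Finset.univ.filter (fun c => ∀ d, s d ≤ s c)

/-- The set of candidates attaining the minimum value of the score `s`. -/
def argminSet {m : ℕ} {α : Type*} [LinearOrder α] (s : Fin m → α) : Finset (Fin m) :=
  Finset.univ.filter (fun c => ∀ d, s c ≤ s d)

/-- An embedding `T` preserves a PSCF `f` if there exists `f'` with
`f' (T X) = f X` for all profiles `X`. -/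
def Preserves {m : ℕ} {X' : Type*} (T : Profile m → X') (f : Profile m → Fin m → ℚ) : Prop :=
  ∃ f' : X' → Fin m → ℚ, ∀ X : Profile m, f' (T X) = f X

/-- Weighted tournament embedding: `(T_WT X) j k = |{voters i : j ≻ᵢ k}|`. -/
def T_WT {m : ℕ} (X : Profile m) : Fin m → Fin m → ℕ :=
  fun a b => wt X a b

/-- Tournament embedding: entry `1` if a strict majority prefers `j` to `k`,
`0` if a strict majority prefers `k` to `j`, and `1/2` on ties. -/
def T_T {m : ℕ} (X : Profile m) : Fin m → Fin m → ℚ :=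
  fun a b =>
    if wt X b a < wt X a b then 1
    else if wt X a b < wt X b a then 0
    else 1/2

/-- Rank frequency embedding: `(T_RF X) c k` is the number of voters ranking
candidate `c` in position `k`. -/
def T_RF {m : ℕ} (X : Profile m) : Fin m → Fin m → ℕ :=
  fun c k => X.countP (fun x => decide (x c = k))

/-- Plurality score of `c`: the number of voters ranking `c` first. -/
def pluralityScore {m : ℕ} (X : Profile m) (c : Fin m) : ℕ :=
  X.countP (fun x => decide ((x c : ℕ) = 0))

/-- Probabilistic Plurality rule: the uniform lottery over the candidates with
maximum plurality score. -/
def plurality {m : ℕ} (X : Profile m) : Fin m → ℚ :=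
  unif (argmaxSet (pluralityScore X))

/-- Borda score of `c`: `Σ_i (m − x_i(c))` where `x_i(c) ∈ {1,…,m}` is the
(1-indexed) rank of `c` on voter `i`'s ballot. -/
def bordaScore {m : ℕ} (X : Profile m) (c : Fin m) : ℕ :=
  (X.map (fun x => m - ((x c : ℕ) + 1))).sum

/-- Probabilistic Borda rule: the uniform lottery over the candidates with
maximum Borda score. -/
def borda {m : ℕ} (X : Profile m) : Fin m → ℚ :=
  unif (argmaxSet (bordaScore X))

/-- Copeland score of `c`: `1` for every other candidate beaten by `c` in a
strict pairwise majority and `1/2` for every pairwise tie. -/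
def copelandScore {m : ℕ} (X : Profile m) (c : Fin m) : ℚ :=
  ∑ b ∈ Finset.univ.filter (fun b => b ≠ c),
    (if wt X b c < wt X c b then 1 else if wt X c b < wt X b c then 0 else 1/2)

/-- Probabilistic Copeland rule: the uniform lottery over the candidates with
maximum Copeland score. -/
def copeland {m : ℕ} (X : Profile m) : Fin m → ℚ :=
  unif (argmaxSet (copelandScore X))

/-- `max_{b ≠ c} d(b,c)`: the maximum weight of an incoming pairwise defeat. -/
def maxIncoming {m : ℕ} (X : Profile m) (c : Fin m) : ℕ :=
  (Finset.univ.filter (fun b => b ≠ c)).sup (fun b => wt X b c)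

/-- Probabilistic Simpson-Kramer (Maximin) rule: the uniform lottery over the
candidates minimizing `max_{b ≠ c} d(b,c)`. -/
def simpsonKramer {m : ℕ} (X : Profile m) : Fin m → ℚ :=
  unif (argminSet (maxIncoming X))

/-- `a` beats `b` by a strict pairwise majority in `X`. -/
def Beats {m : ℕ} (X : Profile m) (a b : Fin m) : Prop :=
  wt X b a < wt X a b

/-- `l` is (the vertex list of) a directed path from `a` to `b` in the majority
graph `G_X`: consecutive vertices are majority defeats. -/
def IsMajPath {m : ℕ} (X : Profile m) (a b : Fin m) (l : List (Fin m)) : Prop :=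
  2 ≤ l.length ∧ l.head? = some a ∧ l.getLast? = some b ∧ l.Chain' (Beats X)

/-- Strength of a path: the minimum weight `d(u,v)` over its consecutive edges
(the initial value `X.length` is an upper bound for all edge weights, so it does
not affect the minimum for an actual path). -/
def pathStrength {m : ℕ} (X : Profile m) (l : List (Fin m)) : ℕ :=
  ((l.zip l.tail).map (fun e => wt X e.1 e.2)).foldr min X.length

/-- Schulze strength `p(a,b)`: the maximum strength of a directed path from
`a` to `b` in `G_X`, and `0` if there is no such path. -/
noncomputable def schulzeP {m : ℕ} (X : Profile m) (a b : Fin m) : ℕ :=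
  sSup {s | ∃ l, IsMajPath X a b l ∧ pathStrength X l = s}

open Classical in
/-- Schulze winners: `W(X) = {a : p(a,b) ≥ p(b,a) for all b}`. -/
noncomputable def schulzeWinners {m : ℕ} (X : Profile m) : Finset (Fin m) :=
  Finset.univ.filter (fun a => ∀ b, schulzeP X b a ≤ schulzeP X a b)

/-- Probabilistic Schulze rule: the uniform lottery over the Schulze winners. -/
noncomputable def schulze {m : ℕ} (X : Profile m) : Fin m → ℚ :=
  unif (schulzeWinners X)

/-- Plurality score of `c` among the remaining candidates `S`: the number of
voters whose most preferred candidate within `S` is `c`. -/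
def irvScore {m : ℕ} (X : Profile m) (S : Finset (Fin m)) (c : Fin m) : ℕ :=
  X.countP (fun x => decide (c ∈ S ∧ ∀ d ∈ S, x c ≤ x d))

/-- One round of IRV: eliminate from `S` the candidate with the lowest
plurality score among `S`, breaking ties by the fixed (lexicographic) order on
`Fin m` (i.e. the least such candidate is eliminated). -/
def irvStep {m : ℕ} (X : Profile m) (S : Finset (Fin m)) : Finset (Fin m) :=
  S.filter (fun c => ¬ ((∀ d ∈ S, irvScore X S c ≤ irvScore X S d) ∧
    ∀ d ∈ S, (∀ e ∈ S, irvScore X S d ≤ irvScore X S e) → c ≤ d))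

/-- The candidates surviving all `m - 1` IRV elimination rounds. -/
def irvWinners {m : ℕ} (X : Profile m) : Finset (Fin m) :=
  (irvStep X)^[m - 1] Finset.univ

/-- Probabilistic IRV: all probability mass on the candidate never
eliminated. -/
def irv {m : ℕ} (X : Profile m) : Fin m → ℚ :=
  unif (irvWinners X)

/-- `c` is a Condorcet winner: it beats every other candidate by a strict
pairwise majority. -/
def IsCondorcetWinner {m : ℕ} (X : Profile m) (c : Fin m) : Prop :=
  ∀ b, b ≠ c → wt X b c < wt X c b

/-- Winners of Black's rule: the Condorcet winner if one exists, otherwise the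
candidates with maximum Borda score. -/
def blackWinners {m : ℕ} (X : Profile m) : Finset (Fin m) :=
  let cw := Finset.univ.filter (fun c => ∀ b, b ≠ c → wt X b c < wt X c b)
  if cw.Nonempty then cw else argmaxSet (bordaScore X)

/-- Probabilistic Black's rule. -/
def black {m : ℕ} (X : Profile m) : Fin m → ℚ :=
  unif (blackWinners X)

/-- Probabilistic positional scoring rule for a score vector `s` (indexed by
position): candidate `c` gets total score `Σ_i s (x_i c)`, and the rule returns
the uniform lottery over the candidates of maximum total score. -/
noncomputable def scoringRule {m : ℕ} (s : Fin m → ℝ) (X : Profile m) : Fin m → ℚ :=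
  unif (argmaxSet (fun c => (X.map (fun x => s (x c))).sum))

def xProf : Profile 3 := [Equiv.refl (Fin 3), (finRotate 3).symm, finRotate 3]

def yProf : Profile 3 := xProf ++ [Equiv.refl (Fin 3), (finRotate 3).symm]

lemma tt_eq : T_T xProf = T_T yProf := by
  funext a b
  fin_cases a <;> fin_cases b <;> rfl

lemma borda_ne : borda xProf ≠ borda yProf := by
  intro h
  have h0 := congrFun h 0
  have hX : argmaxSet (bordaScore xProf) = Finset.univ := by decide
  have hY : argmaxSet (bordaScore yProf) = {1} := by decide
  rw [borda, borda, unif, unif, hX, hY] at h0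
  norm_num at h0

/-- The tournament embedding does not preserve the probabilistic
Borda rule: there exist two profiles with equal tournament matrices whose
probabilistic Borda lotteries differ. -/
theorem tt_not_preserves_borda :
    ∃ m : ℕ, ¬ Preserves (T_T (m := m)) borda ∧
      ∃ X Y : Profile m, T_T X = T_T Y ∧ borda X ≠ borda Y := by
  refine ⟨3, ?_, xProf, yProf, tt_eq, borda_ne⟩
  rintro ⟨f', hf⟩
  exact borda_ne ((hf xProf).symm.trans (tt_eq ▸ hf yProf))
end

section
/- The rank frequency embedding T_RF does not preserve the probabilistic Copeland rule: there exist two profiles (e.g., on 4 candidates with 3 voters each) with equal rank frequency matrices whose probabilistic Copeland lotteries differ. -/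
def mkB (f g : Fin 4 → Fin 4) (h1 : ∀ x, g (f x) = x) (h2 : ∀ x, f (g x) = x) :
    Ballot 4 := ⟨f, g, h1, h2⟩

def bA : Ballot 4 := mkB ![0,1,2,3] ![0,1,2,3] (by decide) (by decide)
def bB : Ballot 4 := mkB ![1,0,2,3] ![1,0,2,3] (by decide) (by decide)
def bC : Ballot 4 := mkB ![3,2,0,1] ![2,3,1,0] (by decide) (by decide)
def bD : Ballot 4 := mkB ![1,2,0,3] ![2,0,1,3] (by decide) (by decide)
def bE : Ballot 4 := mkB ![3,0,2,1] ![1,3,2,0] (by decide) (by decide)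

def Xw : Profile 4 := [bA, bB, bC]
def Yw : Profile 4 := [bA, bD, bE]

lemma sX : copelandScore Xw = ![2, 3, 1, 0] := by
  have h0 : copelandScore Xw 0 = 2 := by
    simp only [copelandScore, Finset.sum_filter, Fin.sum_univ_four]
    norm_num [Fin.ext_iff, show ((2:Fin 4):ℕ) = 2 from rfl, show ((3:Fin 4):ℕ) = 3 from rfl, show wt Xw 0 1 = 1 from by decide, show wt Xw 0 2 = 2 from by decide, show wt Xw 0 3 = 2 from by decide, show wt Xw 1 0 = 2 from by decide, show wt Xw 2 0 = 1 from by decide, show wt Xw 3 0 = 1 from by decide]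
  have h1 : copelandScore Xw 1 = 3 := by
    simp only [copelandScore, Finset.sum_filter, Fin.sum_univ_four]
    norm_num [Fin.ext_iff, show ((2:Fin 4):ℕ) = 2 from rfl, show ((3:Fin 4):ℕ) = 3 from rfl, show wt Xw 0 1 = 1 from by decide, show wt Xw 1 0 = 2 from by decide, show wt Xw 1 2 = 2 from by decide, show wt Xw 1 3 = 2 from by decide, show wt Xw 2 1 = 1 from by decide, show wt Xw 3 1 = 1 from by decide]
  have h2 : copelandScore Xw 2 = 1 := by
    simp only [copelandScore, Finset.sum_filter, Fin.sum_univ_four]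
    norm_num [Fin.ext_iff, show ((2:Fin 4):ℕ) = 2 from rfl, show ((3:Fin 4):ℕ) = 3 from rfl, show wt Xw 0 2 = 2 from by decide, show wt Xw 1 2 = 2 from by decide, show wt Xw 2 0 = 1 from by decide, show wt Xw 2 1 = 1 from by decide, show wt Xw 2 3 = 3 from by decide, show wt Xw 3 2 = 0 from by decide]
  have h3 : copelandScore Xw 3 = 0 := by
    simp only [copelandScore, Finset.sum_filter, Fin.sum_univ_four]
    norm_num [Fin.ext_iff, show ((2:Fin 4):ℕ) = 2 from rfl, show ((3:Fin 4):ℕ) = 3 from rfl, show wt Xw 0 3 = 2 from by decide, show wt Xw 1 3 = 2 from by decide, show wt Xw 2 3 = 3 from by decide, show wt Xw 3 0 = 1 from by decide, show wt Xw 3 1 = 1 from by decide, show wt Xw 3 2 = 0 from by decide]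
  funext c
  fin_cases c
  · exact h0
  · exact h1
  · exact h2
  · exact h3

lemma sY : copelandScore Yw = ![2, 2, 2, 0] := by
  have h0 : copelandScore Yw 0 = 2 := by
    simp only [copelandScore, Finset.sum_filter, Fin.sum_univ_four]
    norm_num [Fin.ext_iff, show ((2:Fin 4):ℕ) = 2 from rfl, show ((3:Fin 4):ℕ) = 3 from rfl, show wt Yw 0 1 = 2 from by decide, show wt Yw 0 2 = 1 from by decide, show wt Yw 0 3 = 2 from by decide, show wt Yw 1 0 = 1 from by decide, show wt Yw 2 0 = 2 from by decide, show wt Yw 3 0 = 1 from by decide]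
  have h1 : copelandScore Yw 1 = 2 := by
    simp only [copelandScore, Finset.sum_filter, Fin.sum_univ_four]
    norm_num [Fin.ext_iff, show ((2:Fin 4):ℕ) = 2 from rfl, show ((3:Fin 4):ℕ) = 3 from rfl, show wt Yw 0 1 = 2 from by decide, show wt Yw 1 0 = 1 from by decide, show wt Yw 1 2 = 2 from by decide, show wt Yw 1 3 = 3 from by decide, show wt Yw 2 1 = 1 from by decide, show wt Yw 3 1 = 0 from by decide]
  have h2 : copelandScore Yw 2 = 2 := by
    simp only [copelandScore, Finset.sum_filter, Fin.sum_univ_four]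
    norm_num [Fin.ext_iff, show ((2:Fin 4):ℕ) = 2 from rfl, show ((3:Fin 4):ℕ) = 3 from rfl, show wt Yw 0 2 = 1 from by decide, show wt Yw 1 2 = 2 from by decide, show wt Yw 2 0 = 2 from by decide, show wt Yw 2 1 = 1 from by decide, show wt Yw 2 3 = 2 from by decide, show wt Yw 3 2 = 1 from by decide]
  have h3 : copelandScore Yw 3 = 0 := by
    simp only [copelandScore, Finset.sum_filter, Fin.sum_univ_four]
    norm_num [Fin.ext_iff, show ((2:Fin 4):ℕ) = 2 from rfl, show ((3:Fin 4):ℕ) = 3 from rfl, show wt Yw 0 3 = 2 from by decide, show wt Yw 1 3 = 3 from by decide, show wt Yw 2 3 = 2 from by decide, show wt Yw 3 0 = 1 from by decide, show wt Yw 3 1 = 0 from by decide, show wt Yw 3 2 = 1 from by decide]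
  funext c
  fin_cases c
  · exact h0
  · exact h1
  · exact h2
  · exact h3

lemma argmaxX : argmaxSet (copelandScore Xw) = {1} := by
  rw [sX]; decide

lemma argmaxY : argmaxSet (copelandScore Yw) = {0, 1, 2} := by
  rw [sY]; decide

lemma hcop : copeland Xw ≠ copeland Yw := by
  intro h
  have h0 := congrFun h 0
  rw [copeland, copeland, argmaxX, argmaxY] at h0
  norm_num [unif, show (0:Fin 4) ∉ ({1} : Finset (Fin 4)) from by decide,
    show (0:Fin 4) ∈ ({0,1,2} : Finset (Fin 4)) from by decide,
    show ({0,1,2} : Finset (Fin 4)).card = 3 from by decide] at h0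

/-- The rank frequency embedding does not preserve the probabilistic
Copeland rule: there exist two profiles with equal rank frequency matrices whose
probabilistic Copeland lotteries differ. -/
theorem trf_not_preserves_copeland :
    ∃ m : ℕ, ¬ Preserves (T_RF (m := m)) copeland ∧
      ∃ X Y : Profile m, T_RF X = T_RF Y ∧ copeland X ≠ copeland Y := by
  have hrf : T_RF Xw = T_RF Yw := by decide
  refine ⟨4, ?_, Xw, Yw, hrf, hcop⟩
  rintro ⟨f', hf'⟩
  exact hcop ((hf' Xw).symm.trans (hrf ▸ hf' Yw))
end

section
/- The rank frequency embedding T_RF does not preserve the probabilistic Schulze rule: there exist two profiles with equal rank frequency matrices whose probabilistic Schulze lotteries differ. -/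
/-!
A Condorcet winner is the unique Schulze winner: it reaches every other candidate by a direct
majority edge of positive weight, while no path of the majority graph ends in it. Two profiles with
the same rank frequencies but different Condorcet winners therefore have different Schulze
lotteries, which no function of the rank frequency matrix can reproduce.
-/

theorem not_preserves_of_ne {m : ℕ} {X' : Type*} {T : Profile m → X'}
    {f : Profile m → Fin m → ℚ} {X Y : Profile m} (hT : T X = T Y) (hf : f X ≠ f Y) :
    ¬ Preserves T f := by
  rintro ⟨f', hf'⟩
  exact hf (by rw [← hf' X, ← hf' Y, hT])

theorem unif_singleton_injective {m : ℕ} : Function.Injective (fun c : Fin m => unif {c}) := by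
  intro a b hab
  by_contra hne
  have h := congrFun hab a
  simp [unif, hne] at h

section Schulze

variable {m : ℕ} {X : Profile m}

theorem pathStrength_le_length (l : List (Fin m)) : pathStrength X l ≤ X.length := by
  unfold pathStrength
  induction (l.zip l.tail).map (fun e => wt X e.1 e.2) with
  | nil => exact le_rfl
  | cons _ _ ih => exact (min_le_right _ _).trans ih

theorem bddAbove_pathStrengths (a b : Fin m) :
    BddAbove {s | ∃ l, IsMajPath X a b l ∧ pathStrength X l = s} :=
  ⟨X.length, by rintro s ⟨l, -, rfl⟩; exact pathStrength_le_length l⟩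

theorem IsMajPath.exists_beats_last {a b : Fin m} {l : List (Fin m)} (hl : IsMajPath X a b l) :
    ∃ u, Beats X u b := by
  obtain ⟨hlen, -, hlast, hchain⟩ := hl
  have hne : l.dropLast ≠ [] := by
    rw [← List.length_pos_iff, List.length_dropLast]; omega
  rw [List.getLast?_eq_some_getLast (by grind), Option.some.injEq] at hlast
  exact ⟨_, hlast ▸ hchain.rel_getLast_dropLast hne⟩

theorem schulzeP_eq_zero_of_forall_not_beats {c : Fin m} (hc : ∀ u, ¬ Beats X u c) (b : Fin m) :
    schulzeP X b c = 0 := by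
  have hempty : {s | ∃ l, IsMajPath X b c l ∧ pathStrength X l = s} = ∅ :=
    Set.eq_empty_of_forall_notMem fun _ ⟨_, hl, _⟩ ↦
      (hl.exists_beats_last.elim fun u hu ↦ hc u hu)
  rw [schulzeP, hempty]
  exact csSup_empty

theorem schulzeP_pos_of_beats {a b : Fin m} (h : Beats X a b) : 0 < schulzeP X a b := by
  have hpos : 0 < wt X a b := (Nat.zero_le _).trans_lt h
  have hedge : IsMajPath X a b [a, b] := ⟨le_rfl, rfl, rfl, List.isChain_pair.mpr h⟩
  refine lt_csSup_of_lt (bddAbove_pathStrengths a b) ⟨[a, b], hedge, rfl⟩ ?_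
  exact lt_min hpos (hpos.trans_le List.countP_le_length)

theorem schulzeWinners_eq_singleton {c : Fin m} (hc : IsCondorcetWinner X c) :
    schulzeWinners X = {c} := by
  have hunbeaten : ∀ u, ¬ Beats X u c := by
    intro u hu
    rcases eq_or_ne u c with rfl | huc
    · exact lt_irrefl _ hu
    · exact (hc u huc).not_gt hu
  ext a
  simp only [schulzeWinners, Finset.mem_filter, Finset.mem_univ, true_and, Finset.mem_singleton]
  refine ⟨fun ha ↦ ?_, fun hac b ↦ ?_⟩
  · by_contra hac
    have := ha c
    rw [schulzeP_eq_zero_of_forall_not_beats hunbeaten a] at this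
    exact (schulzeP_pos_of_beats (hc a hac)).not_ge this
  · rw [hac, schulzeP_eq_zero_of_forall_not_beats hunbeaten b]
    exact Nat.zero_le _

theorem schulze_eq_unif_singleton {c : Fin m} (hc : IsCondorcetWinner X c) :
    schulze X = unif {c} := by
  rw [schulze, schulzeWinners_eq_singleton hc]

end Schulze

def Ballot.ofRanks {m : ℕ} (rank order : Fin m → Fin m)
    (hleft : Function.LeftInverse order rank := by decide)
    (hright : Function.RightInverse order rank := by decide) : Ballot m :=
  ⟨rank, order, hleft, hright⟩

namespace SchulzeCounterexample

-- Candidates `0, 1, 2` are called `a, b, c`; each ballot is named by its preference order.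

def abc : Ballot 3 := Ballot.ofRanks ![0, 1, 2] ![0, 1, 2]
def acb : Ballot 3 := Ballot.ofRanks ![0, 2, 1] ![0, 2, 1]
def bac : Ballot 3 := Ballot.ofRanks ![1, 0, 2] ![1, 0, 2]
def bca : Ballot 3 := Ballot.ofRanks ![2, 0, 1] ![1, 2, 0]
def cab : Ballot 3 := Ballot.ofRanks ![1, 2, 0] ![2, 0, 1]
def cba : Ballot 3 := Ballot.ofRanks ![2, 1, 0] ![2, 1, 0]

-- Rank frequencies (first, second, last) in both profiles: `a` 1, 1, 3; `b` and `c` 2, 2, 1.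
def X : Profile 3 := [abc, cab, bca, bca, cba]
def Y : Profile 3 := [acb, bac, bca, cba, cba]

theorem T_RF_X_eq_Y : T_RF X = T_RF Y := by
  decide

theorem isCondorcetWinner_X : IsCondorcetWinner X 1 := by
  unfold IsCondorcetWinner
  decide

theorem isCondorcetWinner_Y : IsCondorcetWinner Y 2 := by
  unfold IsCondorcetWinner
  decide

end SchulzeCounterexample

open SchulzeCounterexample in
/-- The rank frequency embedding does not preserve the probabilistic
Schulze rule: there exist two profiles with equal rank frequency matrices whose
probabilistic Schulze lotteries differ. -/
theorem trf_not_preserves_schulze :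
    ∃ m : ℕ, ¬ Preserves (T_RF (m := m)) schulze ∧
      ∃ X Y : Profile m, T_RF X = T_RF Y ∧ schulze X ≠ schulze Y := by
  have hne : schulze X ≠ schulze Y := by
    rw [schulze_eq_unif_singleton isCondorcetWinner_X,
      schulze_eq_unif_singleton isCondorcetWinner_Y]
    exact unif_singleton_injective.ne (by decide)
  exact ⟨3, not_preserves_of_ne T_RF_X_eq_Y hne, X, Y, T_RF_X_eq_Y, hne⟩
end

section
/- The rank frequency embedding T_RF does not preserve the probabilistic Simpson-Kramer (Maximin) rule: there exist two profiles with equal rank frequency matrices whose probabilistic Simpson-Kramer lotteries differ. -/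
/-- Auxiliary ballot: the 3-cycle rank function. -/
def skCyc : Ballot 3 := ⟨![1,2,0], ![2,0,1], by decide, by decide⟩

/-- Auxiliary ballot: swap of 0 and 1. -/
def skT01 : Ballot 3 := ⟨![1,0,2], ![1,0,2], by decide, by decide⟩

/-- Auxiliary ballot: swap of 0 and 2. -/
def skT02 : Ballot 3 := ⟨![2,1,0], ![2,1,0], by decide, by decide⟩

/-- Auxiliary ballot: swap of 1 and 2. -/
def skT12 : Ballot 3 := ⟨![0,2,1], ![0,2,1], by decide, by decide⟩

def skX : Profile 3 := [Equiv.refl _, Equiv.refl _, skCyc, skCyc.trans skCyc]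
def skY : Profile 3 := [Equiv.refl _, skT12, skT01, skT02]

theorem sk_argmin_X : argminSet (maxIncoming skX) = {0} := by decide

theorem sk_argmin_Y : argminSet (maxIncoming skY) = {0, 1} := by decide

theorem sk_ne : simpsonKramer skX ≠ simpsonKramer skY := by
  intro h
  have h0 := congrFun h 1
  simp [simpsonKramer, unif, sk_argmin_X, sk_argmin_Y] at h0

/-- The rank frequency embedding does not preserve the probabilistic
Simpson-Kramer rule: there exist two profiles with equal rank frequency matrices whose
probabilistic Simpson-Kramer lotteries differ. -/
theorem trf_not_preserves_simpsonKramer :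
    ∃ m : ℕ, ¬ Preserves (T_RF (m := m)) simpsonKramer ∧
      ∃ X Y : Profile m, T_RF X = T_RF Y ∧ simpsonKramer X ≠ simpsonKramer Y := by
  refine ⟨3, ?_, skX, skY, ?_, ?_⟩
  · rintro ⟨f', hf⟩
    have h1 : T_RF skX = T_RF skY := by decide
    have := (hf skX).symm.trans (h1 ▸ hf skY)
    exact sk_ne this
  · decide
  · exact sk_ne
end

section
/- The rank frequency embedding T_RF does not preserve probabilistic Instant Runoff Voting (IRV): there exist two profiles with equal rank frequency matrices whose probabilistic IRV lotteries differ. -/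
/-- The rank frequency embedding does not preserve the probabilistic
IRV rule: there exist two profiles with equal rank frequency matrices whose
probabilistic IRV lotteries differ. -/
theorem trf_not_preserves_irv :
    ∃ m : ℕ, ¬ Preserves (T_RF (m := m)) irv ∧
      ∃ X Y : Profile m, T_RF X = T_RF Y ∧ irv X ≠ irv Y := by
  refine ⟨3, ?_⟩
  set X : Profile 3 := [Equiv.swap 1 2, Equiv.swap 0 1, Equiv.swap 0 2] with hX
  set Y : Profile 3 := [Equiv.refl (Fin 3), (Equiv.swap 0 2).trans (Equiv.swap 1 2), (Equiv.swap 1 2).trans (Equiv.swap 0 2)] with hY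
  have hrf : T_RF X = T_RF Y := by
    funext c k
    fin_cases c <;> fin_cases k <;> decide
  have hwX : irvWinners X = {2} := by decide
  have hwY : irvWinners Y = {1} := by decide
  have hirv : irv X ≠ irv Y := by
    intro h
    have := congrFun h 1
    rw [irv, irv, hwX, hwY] at this
    norm_num [unif] at this
    exact absurd this (by decide)
  refine ⟨?_, X, Y, hrf, hirv⟩
  rintro ⟨f', hf'⟩
  exact hirv ((hf' X).symm.trans (by rw [hrf, hf' Y]))
end
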